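/- The decoding function delta : Cr(mu) -> Cr(mu), delta(c) = u_{c^{-1}c^∨}^{-1} c^{-1} u_{c^{-1}c^∨}, is an involution: delta(delta(c)) = c for all c in Cr(mu). -/

import Mathlib

open Equiv

/-- Word metric on the symmetric group induced by the set of all transpositions:
`trdist a b` is the minimal number of transpositions whose product is `a⁻¹ * b`. -/
noncomputable def trdist {n : ℕ} (a b : Equiv.Perm (Fin n)) : ℕ :=
  sInf {k | ∃ l : List (Equiv.Perm (Fin n)), l.length = k ∧ (∀ t ∈ l, t.IsSwap) ∧ l.prod = a⁻¹ * b}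

/-- The set of midpoints of `a` and `b`. -/
noncomputable def midpts {n : ℕ} (a b : Equiv.Perm (Fin n)) : Set (Equiv.Perm (Fin n)) :=
  {m | trdist a m + trdist m b = trdist a b ∧ |(trdist a m : ℤ) - (trdist m b : ℤ)| ≤ 1}

/-- The forward cycle on a finite subset: cycles through its elements in increasing order. -/
def fwdCycle {n : ℕ} (s : Finset (Fin n)) : Equiv.Perm (Fin n) :=
  (s.sort (· ≤ ·)).formPerm

/-- The increasing list of minima of the cycles (orbits, including fixed points) of `p`. -/
noncomputable def cycleMins {n : ℕ} (p : Equiv.Perm (Fin n)) : List (Fin n) :=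
  Finset.sort
    (@Finset.filter _ (fun i => ∀ j, p.SameCycle i j → i ≤ j) (Classical.decPred _) Finset.univ) (· ≤ ·)

/-- The number of orbits (cycles, including fixed points) of `p` acting on `Fin n`. -/
noncomputable def cycleCount {n : ℕ} (p : Equiv.Perm (Fin n)) : ℕ :=
  (cycleMins p).length

/-- The ordered cycle type of `p`: the list of cycle (orbit) lengths of `p`,
ordered by increasing cycle minima. -/
noncomputable def orderedCycleType {n : ℕ} (p : Equiv.Perm (Fin n)) : List ℕ :=
  (cycleMins p).map (fun i =>
    (@Finset.filter _ (fun j => p.SameCycle i j) (Classical.decPred _) Finset.univ).card)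

/-- The canonical permutation with ordered cycle type `μ` (starting at offset `off`):
it cyclically permutes the first `μ₁` points in increasing order, then the next `μ₂` points,
and so on. -/
def canonPerm (n : ℕ) : List ℕ → ℕ → Equiv.Perm (Fin n)
  | [], _ => 1
  | m :: rest, off =>
      fwdCycle ((Finset.univ : Finset (Fin n)).filter (fun i => off ≤ i.val ∧ i.val < off + m)) *
        canonPerm n rest (off + m)

/-- `u` conjugates `p` into `q` and maps the sequence of cycle minima of `p`
to that of `q`, entrywise in order. -/
noncomputable def IsConjugator {n : ℕ} (p q u : Equiv.Perm (Fin n)) : Prop :=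
  u * p * u⁻¹ = q ∧ (cycleMins p).map u = cycleMins q

/-- A list of blocks is noncrossing: there are no `a < b < c < d` with `a, c` in one block
and `b, d` in a different block. -/
def NoncrossingList {n : ℕ} (L : List (Finset (Fin n))) : Prop :=
  ¬ ∃ a b c d : Fin n, a < b ∧ b < c ∧ c < d ∧
    ∃ s ∈ L, ∃ t ∈ L, s ≠ t ∧ a ∈ s ∧ c ∈ s ∧ b ∈ t ∧ d ∈ t

/-- The set of all midpoints of pairs `(a, b) ∈ A × B`. -/
noncomputable def midSet {n : ℕ} (A B : Finset (Equiv.Perm (Fin n))) :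
    Finset (Equiv.Perm (Fin n)) :=
  @Finset.filter _ (fun m => ∃ a ∈ A, ∃ b ∈ B, m ∈ midpts a b) (Classical.decPred _) Finset.univ

/-- The distance between two sets of permutations. -/
noncomputable def setDist {n : ℕ} (A B : Finset (Equiv.Perm (Fin n))) : ℕ :=
  sInf {k | ∃ a ∈ A, ∃ b ∈ B, trdist a b = k}

/-- The embedding of the hypercube `Z₂^N` into `S(n)` (for `2N ≤ n`) sending the `i`-th
standard basis vector to the transposition of `2i` and `2i+1` (0-indexed). -/
def cubeMap (N n : ℕ) (h : 2 * N ≤ n) (x : Fin N → ZMod 2) : Equiv.Perm (Fin n) :=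
  ((List.finRange N).map (fun i =>
    if x i = 1 then
      Equiv.swap (⟨2 * i.val, by have := i.isLt; omega⟩ : Fin n)
        ⟨2 * i.val + 1, by have := i.isLt; omega⟩
    else 1)).prod


/-!
A geodesic `1 — c — P` for the transposition metric concatenates to a factorization of `P`
into `trdist 1 P ≤ n - #cycles(P)` transpositions. Each transposition merges at most two classes
of the equivalence relation generated by the factors, so these classes are exactly the cycles of
`P`; in particular `c` and `c⁻¹` map every cycle of `P` into itself. Then `c⁻² P` is conjugate
to `P` and refines its cycles, hence has the same cycles and the same cycle minima, so the
minima-matching conjugator `u'` fixes the minima and preserves every cycle of `P`. For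
`d = u'⁻¹ c⁻¹ u'` one computes `d⁻² P = u'⁻¹ P u'`, whose minima-matching conjugator is
therefore `u'⁻¹`, and `u' d⁻¹ u'⁻¹ = c`.
-/

open Relation

theorem Equivalence.rel_of_eqvGen_of_card_quot_le {α : Type*} [Finite α] {r s : α → α → Prop}
    (hr : Equivalence r) (hrs : ∀ x y, r x y → EqvGen s x y)
    (hcard : Nat.card (Quot r) ≤ Nat.card (Quot s)) {x y : α} (h : EqvGen s x y) : r x y := by
  let φ : Quot r → Quot s := Quot.lift (Quot.mk s) fun a b hab => Quot.eqvGen_sound (hrs a b hab)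
  have hφ : φ.Surjective := Quot.ind fun a => ⟨Quot.mk r a, rfl⟩
  have hφ' : φ.Bijective := (Nat.bijective_iff_surjective_and_card φ).2
    ⟨hφ, le_antisymm hcard (Nat.card_le_card_of_surjective φ hφ)⟩
  exact hr.eqvGen_iff.1 (Quot.eqvGen_exact (hφ'.1 (Quot.eqvGen_sound h)))

namespace Equiv.Perm

variable {α : Type*}

theorem SameCycle.rel_of_forall_rel_apply [Finite α] {f : Perm α} {R : α → α → Prop}
    (hR : Equivalence R) (hf : ∀ x, R x (f x)) {x y : α} (h : f.SameCycle x y) : R x y := by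
  obtain ⟨i, -, rfl⟩ := h.exists_pow_eq'
  clear h
  induction i with
  | zero => exact hR.refl x
  | succ i ih => rw [pow_succ', mul_apply]; exact hR.trans ih (hf _)

def stepRel (l : List (Perm α)) (x y : α) : Prop :=
  ∃ t ∈ l, t x = y

theorem stepRel_of_subset {l l' : List (Perm α)} (h : l ⊆ l') {x y : α} (hxy : stepRel l x y) :
    stepRel l' x y :=
  let ⟨t, ht, htxy⟩ := hxy
  ⟨t, h ht, htxy⟩

theorem eqvGen_stepRel_prod_apply (l : List (Perm α)) (x : α) :
    EqvGen (stepRel l) x (l.prod x) := by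
  induction l with
  | nil => exact EqvGen.refl x
  | cons t l ih =>
    rw [List.prod_cons, mul_apply]
    exact (ih.mono fun _ _ => stepRel_of_subset (List.subset_cons_self t l)).trans _ _ _
      (EqvGen.rel _ _ ⟨t, List.mem_cons_self, rfl⟩)

section SwapList

variable [DecidableEq α]

theorem eqvGen_stepRel_swap_cons {l : List (Perm α)} {a b x y : α}
    (h : EqvGen (stepRel (swap a b :: l)) x y) :
    EqvGen (stepRel l) x y ∨ (EqvGen (stepRel l) x a ∧ EqvGen (stepRel l) b y) ∨
      (EqvGen (stepRel l) x b ∧ EqvGen (stepRel l) a y) := by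
  have hE := EqvGen.is_equivalence (stepRel l)
  induction h with
  | rel u v huv =>
    obtain ⟨t, ht, rfl⟩ := huv
    rcases List.mem_cons.1 ht with rfl | ht
    · rw [swap_apply_def]
      split_ifs with hua hub
      · exact Or.inr (Or.inl ⟨hua ▸ hE.refl u, hE.refl b⟩)
      · exact Or.inr (Or.inr ⟨hub ▸ hE.refl u, hE.refl a⟩)
      · exact Or.inl (hE.refl u)
    · exact Or.inl (EqvGen.rel _ _ ⟨t, ht, rfl⟩)
  | refl u => exact Or.inl (hE.refl u)
  | symm u v _ ih =>
    rcases ih with h | ⟨h₁, h₂⟩ | ⟨h₁, h₂⟩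
    · exact Or.inl (hE.symm h)
    · exact Or.inr (Or.inr ⟨hE.symm h₂, hE.symm h₁⟩)
    · exact Or.inr (Or.inl ⟨hE.symm h₂, hE.symm h₁⟩)
  | trans u v w _ _ ih₁ ih₂ =>
    rcases ih₁ with h₁ | ⟨h₁, h₁'⟩ | ⟨h₁, h₁'⟩ <;>
      rcases ih₂ with h₂ | ⟨h₂, h₂'⟩ | ⟨h₂, h₂'⟩
    · exact Or.inl (hE.trans h₁ h₂)
    · exact Or.inr (Or.inl ⟨hE.trans h₁ h₂, h₂'⟩)
    · exact Or.inr (Or.inr ⟨hE.trans h₁ h₂, h₂'⟩)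
    · exact Or.inr (Or.inl ⟨h₁, hE.trans h₁' h₂⟩)
    · exact Or.inr (Or.inl ⟨h₁, h₂'⟩)
    · exact Or.inl (hE.trans h₁ h₂')
    · exact Or.inr (Or.inr ⟨h₁, hE.trans h₁' h₂⟩)
    · exact Or.inl (hE.trans h₁ h₂')
    · exact Or.inr (Or.inr ⟨h₁, h₂'⟩)

/-- Prepending a transposition merges at most two classes. -/
theorem card_quot_stepRel_le_swap_cons [Finite α] (l : List (Perm α)) (a b : α) :
    Nat.card (Quot (stepRel l)) ≤ Nat.card (Quot (stepRel (swap a b :: l))) + 1 := by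
  classical
  let g : Quot (stepRel l) → Quot (stepRel (swap a b :: l)) :=
    Quot.map id fun _ _ => stepRel_of_subset (List.subset_cons_self _ l)
  let j : Quot (stepRel l) → Option (Quot (stepRel (swap a b :: l))) := fun z =>
    if z = Quot.mk _ b then none else some (g z)
  have hj : j.Injective := by
    rintro ⟨x⟩ ⟨y⟩ hxy
    by_cases hx : Quot.mk _ x = Quot.mk (stepRel l) b <;>
      by_cases hy : Quot.mk _ y = Quot.mk (stepRel l) b <;>
      simp only [j, hx, hy, if_true, if_false, reduceCtorEq, Option.some.injEq] at hxy ⊢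
    rcases eqvGen_stepRel_swap_cons (Quot.eqvGen_exact hxy) with h | ⟨-, h⟩ | ⟨h, -⟩
    · exact Quot.eqvGen_sound h
    · exact absurd (Quot.eqvGen_sound h.symm) hy
    · exact absurd (Quot.eqvGen_sound h) hx
  simpa [Finite.card_option] using Nat.card_le_card_of_injective j hj

theorem card_sub_length_le_card_quot_stepRel [Fintype α] :
    ∀ l : List (Perm α), (∀ t ∈ l, t.IsSwap) →
      Fintype.card α - l.length ≤ Nat.card (Quot (stepRel l))
  | [], _ => by
    have hinj : (Quot.mk (stepRel ([] : List (Perm α)))).Injective := fun x y hxy =>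
      (Equivalence.eqvGen_iff eq_equivalence).1 <| (Quot.eqvGen_exact hxy).mono
        fun _ _ ⟨_, ht, _⟩ => absurd ht List.not_mem_nil
    simpa using Nat.card_le_card_of_injective _ hinj
  | t :: l, hl => by
    obtain ⟨a, b, -, rfl⟩ := hl t List.mem_cons_self
    have ih := card_sub_length_le_card_quot_stepRel l fun s hs => hl s (List.mem_cons_of_mem _ hs)
    have := card_quot_stepRel_le_swap_cons l a b
    simp only [List.length_cons]
    omega

theorem sameCycle_of_eqvGen_stepRel [Fintype α] {l : List (Perm α)} (hl : ∀ t ∈ l, t.IsSwap)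
    {P : Perm α} (hP : l.prod = P)
    (hlen : l.length + Nat.card (Quot P.SameCycle) ≤ Fintype.card α)
    {x y : α} (h : EqvGen (stepRel l) x y) : P.SameCycle x y := by
  refine (SameCycle.equivalence P).rel_of_eqvGen_of_card_quot_le (fun a b hab => ?_) ?_ h
  · exact (hP ▸ hab).rel_of_forall_rel_apply (EqvGen.is_equivalence _)
      (eqvGen_stepRel_prod_apply l)
  · have := card_sub_length_le_card_quot_stepRel l hl
    omega

theorem sameCycle_swap_apply {P : Perm α} {a b : α} (hab : P.SameCycle a b) (x : α) :
    P.SameCycle x (swap a b x) := by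
  rw [swap_apply_def]
  split_ifs with ha hb
  · exact ha ▸ hab
  · exact hb ▸ hab.symm
  · exact SameCycle.refl P x

theorem SameCycle.of_swap_mul [Finite α] {P : Perm α} {a b : α} (hab : P.SameCycle a b)
    {x y : α} (h : (swap a b * P).SameCycle x y) : P.SameCycle x y :=
  h.rel_of_forall_rel_apply (SameCycle.equivalence P) fun z =>
    (sameCycle_apply_right.2 (SameCycle.refl P z)).trans (sameCycle_swap_apply hab (P z))

/-- Splitting off the fixed point `x` creates a new cycle. -/
theorem card_quot_sameCycle_lt_swap_mul [Finite α] {P : Perm α} {x : α} (hx : P x ≠ x) :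
    Nat.card (Quot P.SameCycle) < Nat.card (Quot (swap x (P x) * P).SameCycle) := by
  have hxPx : P.SameCycle x (P x) := sameCycle_apply_right.2 (SameCycle.refl P x)
  by_contra! hle
  have h := (SameCycle.equivalence _).rel_of_eqvGen_of_card_quot_le
    (fun _ _ hab => EqvGen.rel _ _ (SameCycle.of_swap_mul hxPx hab)) hle (EqvGen.rel _ _ hxPx)
  exact hx (h.eq_of_left (by simp [Function.IsFixedPt])).symm

end SwapList

theorem card_quot_sameCycle_conj (u P : Perm α) :
    Nat.card (Quot (u * P * u⁻¹).SameCycle) = Nat.card (Quot P.SameCycle) :=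
  Nat.card_congr (Quot.congr u.symm fun _ _ => sameCycle_conj)

theorem sameCycle_iff_of_conj [Finite α] {P A u : Perm α} (hu : u * P * u⁻¹ = A)
    (hA : ∀ x, P.SameCycle x (A x)) {x y : α} : A.SameCycle x y ↔ P.SameCycle x y := by
  have hAP : ∀ x y, A.SameCycle x y → P.SameCycle x y := fun _ _ h =>
    h.rel_of_forall_rel_apply (SameCycle.equivalence P) hA
  refine ⟨hAP x y, fun h => (SameCycle.equivalence A).rel_of_eqvGen_of_card_quot_le
    (fun a b hab => EqvGen.rel _ _ (hAP a b hab)) ?_ (EqvGen.rel _ _ h)⟩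
  rw [← hu, card_quot_sameCycle_conj]

theorem apply_zpow_apply_of_conj {P q u : Perm α} (h : u * P * u⁻¹ = q) (i : ℤ) (x : α) :
    u ((P ^ i) x) = (q ^ i) (u x) := by
  rw [← h, conj_zpow]
  simp [mul_apply]

end Equiv.Perm

section SymmetricGroup

open Equiv.Perm

variable {n : ℕ}

theorem trdist_le_length {a b : Perm (Fin n)} {l : List (Perm (Fin n))}
    (hl : ∀ t ∈ l, t.IsSwap) (hprod : l.prod = a⁻¹ * b) : trdist a b ≤ l.length :=
  Nat.sInf_le ⟨l, rfl, hl, hprod⟩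

theorem exists_isSwap_list_length_eq_trdist (a b : Perm (Fin n)) :
    ∃ l : List (Perm (Fin n)),
      l.length = trdist a b ∧ (∀ t ∈ l, t.IsSwap) ∧ l.prod = a⁻¹ * b := by
  obtain ⟨l, hprod, hl⟩ := (truncSwapFactors (a⁻¹ * b)).out
  exact Nat.sInf_mem (s := {k | ∃ l : List (Perm (Fin n)),
    l.length = k ∧ (∀ t ∈ l, t.IsSwap) ∧ l.prod = a⁻¹ * b}) ⟨l.length, l, rfl, hl, hprod⟩

theorem trdist_one_swap_mul_le {x y : Fin n} (hxy : x ≠ y) (Q : Perm (Fin n)) :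
    trdist 1 (swap x y * Q) ≤ trdist 1 Q + 1 := by
  obtain ⟨l, hlen, hl, hprod⟩ := exists_isSwap_list_length_eq_trdist 1 Q
  refine hlen ▸ trdist_le_length (l := swap x y :: l) ?_ (by simp_all)
  simpa [List.forall_mem_cons] using ⟨⟨x, y, hxy, rfl⟩, hl⟩

theorem trdist_one_add_card_quot_sameCycle_le (P : Perm (Fin n)) :
    trdist 1 P + Nat.card (Quot P.SameCycle) ≤ n := by
  by_cases hP : P = 1
  · subst hP
    have h₁ : trdist 1 (1 : Perm (Fin n)) ≤ 0 := trdist_le_length (l := []) (by simp) (by simp)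
    have h₂ := Nat.card_le_card_of_surjective _
      (Quot.mk_surjective (r := (1 : Perm (Fin n)).SameCycle))
    simp only [Nat.card_eq_fintype_card, Fintype.card_fin] at h₂
    omega
  obtain ⟨x, hx⟩ : ∃ x, P x ≠ x := by
    by_contra! h
    exact hP (Equiv.ext h)
  have h₁ := trdist_one_add_card_quot_sameCycle_le (swap x (P x) * P)
  have h₂ := trdist_one_swap_mul_le hx.symm (swap x (P x) * P)
  have h₃ := card_quot_sameCycle_lt_swap_mul hx
  rw [swap_mul_self_mul] at h₂
  omega
termination_by P.support.card
decreasing_by exact card_support_swap_mul hx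

theorem sameCycle_apply_of_trdist_add_eq {P c : Perm (Fin n)}
    (h : trdist 1 c + trdist c P = trdist 1 P) (x : Fin n) : P.SameCycle x (c x) := by
  obtain ⟨l₁, hlen₁, hl₁, hprod₁⟩ := exists_isSwap_list_length_eq_trdist 1 c
  obtain ⟨l₂, hlen₂, hl₂, hprod₂⟩ := exists_isSwap_list_length_eq_trdist c P
  rw [inv_one, one_mul] at hprod₁
  refine sameCycle_of_eqvGen_stepRel (l := l₁ ++ l₂) (fun t ht => ?_) ?_ ?_ ?_
  · exact (List.mem_append.1 ht).elim (hl₁ t) (hl₂ t)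
  · rw [List.prod_append, hprod₁, hprod₂, mul_inv_cancel_left]
  · simpa [hlen₁, hlen₂, h] using trdist_one_add_card_quot_sameCycle_le P
  · exact hprod₁ ▸ (eqvGen_stepRel_prod_apply l₁ x).mono fun _ _ =>
      stepRel_of_subset (List.subset_append_left l₁ l₂)

theorem cycleMins_congr {A P : Perm (Fin n)} (h : ∀ x y, A.SameCycle x y ↔ P.SameCycle x y) :
    cycleMins A = cycleMins P := by
  unfold cycleMins
  congr 1
  ext x
  simp only [Finset.mem_filter, h]

theorem exists_mem_cycleMins_sameCycle (P : Perm (Fin n)) (x : Fin n) :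
    ∃ m ∈ cycleMins P, P.SameCycle m x := by
  classical
  let s := Finset.univ.filter (P.SameCycle x)
  have hs : s.Nonempty := ⟨x, by simpa [s] using SameCycle.refl P x⟩
  have hmin : P.SameCycle x (s.min' hs) := (Finset.mem_filter.1 (s.min'_mem hs)).2
  refine ⟨s.min' hs, ?_, hmin.symm⟩
  simp only [cycleMins, Finset.mem_sort, Finset.mem_filter, Finset.mem_univ, true_and]
  exact fun j hj => s.min'_le j (by simp [s, hmin.trans hj])

theorem IsConjugator.unique {P q u v : Perm (Fin n)} (hu : IsConjugator P q u)
    (hv : IsConjugator P q v) : u = v := by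
  have hmins := List.map_inj_left.1 (hu.2.trans hv.2.symm)
  ext x
  obtain ⟨m, hm, i, rfl⟩ := exists_mem_cycleMins_sameCycle P x
  rw [apply_zpow_apply_of_conj hu.1, apply_zpow_apply_of_conj hv.1, hmins m hm]

theorem IsConjugator.apply_eq_self_of_mem_cycleMins {P q u : Perm (Fin n)} (hu : IsConjugator P q u)
    (hq : ∀ x y, q.SameCycle x y ↔ P.SameCycle x y) {m : Fin n} (hm : m ∈ cycleMins P) :
    u m = m := by
  have h : (cycleMins P).map u = (cycleMins P).map id := by
    rw [hu.2, List.map_id, cycleMins_congr hq]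
  exact List.map_inj_left.1 h m hm

theorem IsConjugator.sameCycle_apply {P q u : Perm (Fin n)} (hu : IsConjugator P q u)
    (hq : ∀ x y, q.SameCycle x y ↔ P.SameCycle x y) (x : Fin n) : P.SameCycle x (u x) := by
  obtain ⟨m, hm, i, rfl⟩ := exists_mem_cycleMins_sameCycle P x
  rw [apply_zpow_apply_of_conj hu.1, hu.apply_eq_self_of_mem_cycleMins hq hm]
  exact (SameCycle.zpow_right (SameCycle.refl P m)).symm.trans
    ((hq _ _).1 (SameCycle.zpow_right (SameCycle.refl q m)))

theorem IsConjugator.inv {P q u : Perm (Fin n)} (hu : IsConjugator P q u)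
    (hq : ∀ x y, q.SameCycle x y ↔ P.SameCycle x y) :
    IsConjugator P (u⁻¹ * P * u) u⁻¹ := by
  refine ⟨by rw [inv_inv], ?_⟩
  have hsame : ∀ x y, (u⁻¹ * P * u).SameCycle x y ↔ P.SameCycle x y := fun x y => by
    rw [← inv_inv u, inv_inv u⁻¹, sameCycle_conj, inv_inv]
    exact ⟨fun h => (hu.sameCycle_apply hq x).trans (h.trans (hu.sameCycle_apply hq y).symm),
      fun h => (hu.sameCycle_apply hq x).symm.trans (h.trans (hu.sameCycle_apply hq y))⟩
  rw [cycleMins_congr hsame]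
  conv_rhs => rw [← List.map_id (cycleMins P)]
  exact List.map_inj_left.2 fun m hm => by
    rw [id, inv_eq_iff_eq, hu.apply_eq_self_of_mem_cycleMins hq hm]

end SymmetricGroup

theorem stmt17_general (n : ℕ)
    (P c u' d u'' : Equiv.Perm (Fin n))
    (hc : c ∈ midpts 1 P)
    (hu' : IsConjugator P (c⁻¹ * (c⁻¹ * P)) u')
    (hd : d = u'⁻¹ * c⁻¹ * u')
    (hu'' : IsConjugator P (d⁻¹ * (d⁻¹ * P)) u'') :
    u''⁻¹ * d⁻¹ * u'' = c := by
  have hcP : ∀ x, P.SameCycle x (c x) := sameCycle_apply_of_trdist_add_eq hc.1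
  have hcP' : ∀ x, P.SameCycle x (c⁻¹ x) := fun x =>
    (Perm.sameCycle_apply_right.2 (Perm.SameCycle.refl c⁻¹ x)).of_inv.rel_of_forall_rel_apply
      (Perm.SameCycle.equivalence P) hcP
  have hA : ∀ x y, (c⁻¹ * (c⁻¹ * P)).SameCycle x y ↔ P.SameCycle x y := fun x y =>
    Perm.sameCycle_iff_of_conj hu'.1 fun z =>
      ((Perm.sameCycle_apply_right.2 (Perm.SameCycle.refl P z)).trans (hcP' _)).trans (hcP' _)
  have hq : d⁻¹ * (d⁻¹ * P) = u'⁻¹ * P * u' := by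
    have h : u' * P = c⁻¹ * (c⁻¹ * P) * u' := by rw [← hu'.1]; group
    calc d⁻¹ * (d⁻¹ * P) = u'⁻¹ * c * c * (u' * P) := by rw [hd]; group
      _ = u'⁻¹ * P * u' := by rw [h]; group
  obtain rfl : u'' = u'⁻¹ := hu''.unique (hq ▸ hu'.inv hA)
  rw [hd]
  group

theorem stmt17 (n : ℕ) (μ : List ℕ) (hpos : ∀ x ∈ μ, 0 < x) (hsum : μ.sum = n)
    (P c u' d u'' : Equiv.Perm (Fin n)) (hP : P = canonPerm n μ 0)
    (hc : c ∈ midpts 1 P)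
    (hu' : IsConjugator P (c⁻¹ * (c⁻¹ * P)) u')
    (hd : d = u'⁻¹ * c⁻¹ * u')
    (hu'' : IsConjugator P (d⁻¹ * (d⁻¹ * P)) u'') :
    u''⁻¹ * d⁻¹ * u'' = c :=
  stmt17_general n P c u' d u'' hc hu' hd hu''
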